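/- In the synthetic setup, fix ω ∈ 𝒵₊ with [ω] ∈ Pos(X), and define Ẽ_ω(f) := sup{E_ω(φ) : φ ∈ 𝒟_ω, φ ≤ f} for f ∈ C⁰(X). Then for all f ∈ C⁰(X) and all μ ∈ 𝓜 one has the Legendre duality formulas Ẽ_ω(f) = inf_{ν∈𝓜} (J_ω(ν) + ∫ f dν) and J_ω(μ) = sup_{g∈C⁰(X)} (Ẽ_ω(g) − ∫ g dμ). -/

import Mathlib

open scoped BigOperators
noncomputable section

/-- The synthetic pluripotential-theoretic setup of Boucksom–Jonsson. -/
structure PPSetup where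
  /-- the compact Hausdorff topological space -/
  X : Type
  [topX : TopologicalSpace X]
  [cptX : CompactSpace X]
  [t2X : T2Space X]
  /-- the dense space of test functions -/
  D : Submodule ℝ C(X, ℝ)
  D_dense : Dense (D : Set C(X, ℝ))
  D_const : ∀ c : ℝ, ContinuousMap.const X c ∈ D
  /-- the space of closed (1,1)-forms, a partially ordered real vector space -/
  Z : Type
  [zGroup : AddCommGroup Z]
  [zOrder : PartialOrder Z]
  [zOrdered : IsOrderedAddMonoid Z]
  [zModule : Module ℝ Z]
  [zSMul : PosSMulStrictMono ℝ Z]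
  [zSMulReflect : PosSMulReflectLT ℝ Z]
  /-- the positive cone spans Z -/
  pos_spans : Submodule.span ℝ {θ : Z | 0 ≤ θ} = ⊤
  /-- the positive cone is closed in the finest vector space topology -/
  pos_closed : ∀ (k : ℕ) (u : (Fin k → ℝ) →ₗ[ℝ] Z), IsClosed {x : Fin k → ℝ | 0 ≤ u x}
  /-- the ddᶜ operator -/
  ddc : D →ₗ[ℝ] Z
  ddc_const : ∀ c : ℝ, ddc ⟨ContinuousMap.const X c, D_const c⟩ = 0
  /-- the dimension is n = m + 1 ≥ 1 -/
  m : ℕ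
  /-- the wedge pairing: an n-tuple of forms yields a signed Radon measure, encoded as the
  linear functional (f ↦ ∫ f θ₁∧⋯∧θₙ) on C(X,ℝ). -/
  wedge : MultilinearMap ℝ (fun _ : Fin (m + 1) => Z) (C(X, ℝ) →ₗ[ℝ] ℝ)
  wedge_symm : ∀ (σ : Equiv.Perm (Fin (m + 1))) (θ : Fin (m + 1) → Z), wedge (θ ∘ σ) = wedge θ
  wedge_ne : wedge ≠ 0
  wedge_pos : ∀ θ : Fin (m + 1) → Z, (∀ i, 0 ≤ θ i) → ∀ f : C(X, ℝ), 0 ≤ f → 0 ≤ wedge θ f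
  hodge_symm : ∀ (θ : Fin m → Z) (φ ψ : D),
    wedge (Fin.cons (ddc ψ) θ) (φ : C(X, ℝ)) = wedge (Fin.cons (ddc φ) θ) (ψ : C(X, ℝ))
  hodge_neg : ∀ θ : Fin m → Z, (∀ i, 0 ≤ θ i) → ∀ φ : D,
    wedge (Fin.cons (ddc φ) θ) (φ : C(X, ℝ)) ≤ 0

attribute [instance] PPSetup.topX PPSetup.cptX PPSetup.t2X PPSetup.zGroup PPSetup.zOrder
  PPSetup.zOrdered PPSetup.zModule PPSetup.zSMul PPSetup.zSMulReflect

namespace PPSetup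

variable (S : PPSetup)

/-- the dimension -/
abbrev n : ℕ := S.m + 1

/-- the constant function 1 -/
def one : C(S.X, ℝ) := ContinuousMap.const S.X 1

/-- constants as test functions -/
def constD (c : ℝ) : S.D := ⟨ContinuousMap.const S.X c, S.D_const c⟩

/-- Bott–Chern cohomology -/
abbrev HBC := S.Z ⧸ LinearMap.range S.ddc

/-- the class of a form -/
def cls (θ : S.Z) : S.HBC := Submodule.Quotient.mk θ

/-- the positive cone in Bott–Chern cohomology: the interior of the image of Z₊ with respect to
the finest vector space topology, described concretely as the algebraic interior. -/
def Pos : Set S.HBC :=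
  {α | ∀ β : S.HBC, ∃ ε : ℝ, 0 < ε ∧ ∀ t : ℝ, |t| ≤ ε → ∃ θ : S.Z, 0 ≤ θ ∧ S.cls θ = α + t • β}

/-- θ-psh test functions -/
def psh (θ : S.Z) : Set S.D := {φ | 0 ≤ θ + S.ddc φ}

/-- the energy pairing, given by its explicit formula -/
def epair (p : Fin (S.m + 2) → S.Z × S.D) : ℝ :=
  ∑ i : Fin (S.m + 2),
    S.wedge (fun j : Fin (S.m + 1) =>
      if ((i.succAbove j : Fin (S.m + 2)) : ℕ) < (i : ℕ) then (p (i.succAbove j)).1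
      else (p (i.succAbove j)).1 + S.ddc (p (i.succAbove j)).2)
      (((p i).2 : C(S.X, ℝ)))

/-- (ω,φ)^{n+1} -/
def epow (ω : S.Z) (φ : S.D) : ℝ := S.epair fun _ => (ω, φ)

/-- the volume ∫ ωⁿ -/
def Vol (ω : S.Z) : ℝ := S.wedge (fun _ => ω) S.one

/-- the Monge–Ampère energy E_ω(φ) = (ω,φ)^{n+1}/((n+1)V_ω) -/
def En (ω : S.Z) (φ : S.D) : ℝ := S.epow ω φ / ((S.m + 2) * S.Vol ω)

/-- the Monge–Ampère measure MA_ω(φ) = V_ω⁻¹ (ω+ddᶜφ)ⁿ, as a functional on C(X,ℝ) -/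
def MAfun (ω : S.Z) (φ : S.D) : C(S.X, ℝ) →ₗ[ℝ] ℝ := (S.Vol ω)⁻¹ • S.wedge fun _ => ω + S.ddc φ

/-- μ_ω = V_ω⁻¹ ωⁿ -/
def muOmega (ω : S.Z) : C(S.X, ℝ) →ₗ[ℝ] ℝ := (S.Vol ω)⁻¹ • S.wedge fun _ => ω

/-- the Dirichlet functional J_ω(φ,ψ) -/
def Jfun (ω : S.Z) (φ ψ : S.D) : ℝ :=
  S.En ω φ - S.En ω ψ + S.MAfun ω φ ((ψ : C(S.X, ℝ)) - (φ : C(S.X, ℝ)))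

/-- J_ω(φ) := J_ω(0,φ) = ∫φ dμ_ω − E_ω(φ) -/
def Jnorm (ω : S.Z) (φ : S.D) : ℝ := S.muOmega ω (φ : C(S.X, ℝ)) - S.En ω φ

/-- probability measures, encoded as positive normalized functionals on C(X,ℝ) -/
def isProb (μ : C(S.X, ℝ) →ₗ[ℝ] ℝ) : Prop :=
  (∀ f : C(S.X, ℝ), 0 ≤ f → 0 ≤ μ f) ∧ μ S.one = 1

/-- the space 𝓜 of Radon probability measures -/
abbrev M := {μ : C(S.X, ℝ) →ₗ[ℝ] ℝ // S.isProb μ}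

/-- the defining set for the energy J_ω(μ) -/
def Jset (ω : S.Z) (μ : C(S.X, ℝ) →ₗ[ℝ] ℝ) : Set ℝ :=
  {x | ∃ φ ∈ S.psh ω, x = S.En ω φ - μ (φ : C(S.X, ℝ))}

/-- μ has finite energy: J_ω(μ) < ∞ -/
def finEnergy (ω : S.Z) (μ : C(S.X, ℝ) →ₗ[ℝ] ℝ) : Prop := BddAbove (S.Jset ω μ)

/-- the energy J_ω(μ) of a measure -/
def Jmes (ω : S.Z) (μ : C(S.X, ℝ) →ₗ[ℝ] ℝ) : ℝ := sSup (S.Jset ω μ)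

/-- the relative energy J_ω(μ,ψ) -/
def JmesRel (ω : S.Z) (μ : C(S.X, ℝ) →ₗ[ℝ] ℝ) (ψ : S.D) : ℝ :=
  sSup {x | ∃ φ ∈ S.psh ω, x = S.En ω φ - S.En ω ψ + μ ((ψ : C(S.X, ℝ)) - (φ : C(S.X, ℝ)))}

/-- the space 𝓜¹_ω of measures of finite energy -/
abbrev M1 (ω : S.Z) := {μ : S.M // S.finEnergy ω μ.1}

/-- the weak topology on 𝓜 -/
def weakTop : TopologicalSpace S.M :=
  TopologicalSpace.induced (fun μ (f : C(S.X, ℝ)) => μ.1 f) inferInstance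

/-- the strong topology on 𝓜¹_ω: coarsest refinement of the weak topology making J_ω continuous -/
def strongTop (ω : S.Z) : TopologicalSpace (S.M1 ω) :=
  (TopologicalSpace.induced (fun μ : S.M1 ω => μ.1) S.weakTop) ⊓
    TopologicalSpace.induced (fun μ : S.M1 ω => S.Jmes ω μ.1.1) inferInstance

/-- the defining set for T_ω -/
def Tset (ω : S.Z) : Set ℝ :=
  {x | ∃ φ ∈ S.psh ω, x = (⨆ p : S.X, (φ : C(S.X, ℝ)) p) - S.muOmega ω (φ : C(S.X, ℝ))}

/-- the submean value property for ω: T_ω < ∞ -/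
def submeanBdd (ω : S.Z) : Prop := BddAbove (S.Tset ω)

/-- T_ω -/
def Tsup (ω : S.Z) : ℝ := sSup (S.Tset ω)

/-- commensurability of two semipositive forms: finite Thompson distance -/
def commensurable (ω ω' : S.Z) : Prop :=
  ∃ δ : ℝ, 0 ≤ δ ∧ Real.exp (-δ) • ω ≤ ω' ∧ ω' ≤ Real.exp δ • ω

/-- the Thompson distance -/
def dT (ω ω' : S.Z) : ℝ :=
  sInf {δ : ℝ | 0 ≤ δ ∧ Real.exp (-δ) • ω ≤ ω' ∧ ω' ≤ Real.exp δ • ω}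

/-- θ is ω-bounded, i.e. ‖θ‖_ω < ∞ -/
def bddBy (ω θ : S.Z) : Prop := ∃ C : ℝ, 0 ≤ C ∧ -(C • ω) ≤ θ ∧ θ ≤ C • ω

/-- ‖θ‖_ω -/
def znorm (ω θ : S.Z) : ℝ := sInf {C : ℝ | 0 ≤ C ∧ -(C • ω) ≤ θ ∧ θ ≤ C • ω}

/-- 𝒟_ω admits maxima -/
def admitsMaxima (ω : S.Z) : Prop :=
  ∀ φ ∈ S.psh ω, ∀ ψ ∈ S.psh ω, ∀ f : S.D,
    (∀ x : S.X, max ((φ : C(S.X, ℝ)) x) ((ψ : C(S.X, ℝ)) x) < (f : C(S.X, ℝ)) x) →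
    ∃ τ ∈ S.psh ω,
      (∀ x : S.X, max ((φ : C(S.X, ℝ)) x) ((ψ : C(S.X, ℝ)) x) ≤ (τ : C(S.X, ℝ)) x) ∧
      ∀ x : S.X, (τ : C(S.X, ℝ)) x < (f : C(S.X, ℝ)) x

/-- the orthogonality property for ω -/
def orthogonal (ω : S.Z) : Prop :=
  S.admitsMaxima ω ∧
    ∀ f : S.D, ∀ ε : ℝ, 0 < ε →
      ∃ φ₀ ∈ S.psh ω, (∀ x : S.X, (φ₀ : C(S.X, ℝ)) x < (f : C(S.X, ℝ)) x) ∧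
        ∀ φ ∈ S.psh ω, (∀ x : S.X, (φ₀ : C(S.X, ℝ)) x ≤ (φ : C(S.X, ℝ)) x) →
          (∀ x : S.X, (φ : C(S.X, ℝ)) x < (f : C(S.X, ℝ)) x) →
          S.MAfun ω φ ((f : C(S.X, ℝ)) - (φ : C(S.X, ℝ))) ≤ ε

/-- the extended energy Ẽ_ω(f) for f ∈ C⁰(X) -/
def EnExt (ω : S.Z) (f : C(S.X, ℝ)) : ℝ :=
  sSup {x | ∃ φ ∈ S.psh ω, (φ : C(S.X, ℝ)) ≤ f ∧ x = S.En ω φ}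

/-- the metric dd_ω on measures -/
def ddMetric (ω : S.Z) (μ ν : C(S.X, ℝ) →ₗ[ℝ] ℝ) : ℝ :=
  sSup {x | ∃ φ ∈ S.psh ω, S.Jnorm ω φ ≤ 1 ∧ x = |μ (φ : C(S.X, ℝ)) - ν (φ : C(S.X, ℝ))|}

/-- the characterizing property of the Dirichlet quasi-metric d_ω on 𝓜¹_ω -/
def isDirichlet (ω : S.Z) (d : S.M1 ω → S.M1 ω → ℝ) : Prop :=
  (∀ μ ν, 0 ≤ d μ ν) ∧
  (@Continuous (S.M1 ω × S.M1 ω) ℝ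
    (@instTopologicalSpaceProd _ _ (S.strongTop ω) (S.strongTop ω)) _ fun p => d p.1 p.2) ∧
  ∀ φ ∈ S.psh ω, ∀ ψ ∈ S.psh ω, ∀ μ ν : S.M1 ω,
    μ.1.1 = S.MAfun ω φ → ν.1.1 = S.MAfun ω ψ → d μ ν = S.Jfun ω φ ψ

/-- the characterizing property of the θ-twisted energy J_ω^θ on 𝓜¹ -/
def isTwisted (ω θ : S.Z) (Jt : S.M1 ω → ℝ) : Prop :=
  (@Continuous _ _ (S.strongTop ω) _ Jt) ∧
  ∀ φ ∈ S.psh ω, ∀ ν : S.M1 ω, ν.1.1 = S.MAfun ω φ →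
    Jt ν = deriv (fun t : ℝ => S.En (ω + t • θ) φ) 0

end PPSetup

namespace PPSetup

variable (S : PPSetup)

/-! ### Basic wedge manipulation lemmas -/

lemma val_succAbove {k : ℕ} (i : Fin (k + 1)) (j : Fin k) :
    ((i.succAbove j : Fin (k + 1)) : ℕ) = if (j : ℕ) < (i : ℕ) then (j : ℕ) else (j : ℕ) + 1 := by
  rcases Nat.lt_or_ge (j : ℕ) (i : ℕ) with h | h
  · rw [Fin.succAbove_of_castSucc_lt _ _ (by simpa [Fin.lt_def] using h), if_pos h,
      Fin.coe_castSucc]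
  · rw [Fin.succAbove_of_le_castSucc _ _ (by simpa [Fin.le_def] using h),
      if_neg (not_lt.mpr h), Fin.val_succ]

lemma wedge_insertNth (i : Fin (S.m + 1)) (z : S.Z) (p : Fin S.m → S.Z) :
    S.wedge (i.insertNth z p) = S.wedge (Fin.cons z p) := by
  rw [← S.wedge_symm i.cycleRange (Fin.cons z p)]
  congr 1
  funext l
  refine Fin.succAboveCases i ?_ ?_ l
  · simp [Fin.cycleRange_self]
  · intro j
    simp [Fin.cycleRange_succAbove]

lemma wedge_update (b : Fin (S.m + 1) → S.Z) (i : Fin (S.m + 1)) (z : S.Z) :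
    S.wedge (Function.update b i z) = S.wedge (Fin.cons z (i.removeNth b)) := by
  rw [← Fin.insertNth_removeNth, wedge_insertNth]

lemma wedge_cons_ddc_one (χ : S.D) (θ : Fin S.m → S.Z) :
    S.wedge (Fin.cons (S.ddc χ) θ) S.one = 0 := by
  have h := S.hodge_symm θ (S.constD 1) χ
  have h2 : S.ddc (S.constD 1) = 0 := S.ddc_const 1
  have h3 : ((S.constD 1 : S.D) : C(S.X, ℝ)) = S.one := rfl
  rw [h3] at h
  rw [h, h2]
  rw [(S.wedge).map_coord_zero (m := Fin.cons 0 θ) 0 (Fin.cons_zero _ _)]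
  simp

lemma wedge_cons_sub (z w : S.Z) (θ : Fin S.m → S.Z) (f : C(S.X, ℝ)) :
    S.wedge (Fin.cons (z - w) θ) f
      = S.wedge (Fin.cons z θ) f - S.wedge (Fin.cons w θ) f := by
  calc S.wedge (Fin.cons (z - w) θ) f
      = S.wedge (Function.update (Fin.cons z θ) 0 (z - w)) f := by rw [Fin.update_cons_zero]
    _ = S.wedge (Function.update (Fin.cons z θ) 0 z) f
          - S.wedge (Function.update (Fin.cons z θ) 0 w) f := by
        rw [(S.wedge).map_update_sub]; simp
    _ = S.wedge (Fin.cons z θ) f - S.wedge (Fin.cons w θ) f := by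
        rw [Fin.update_cons_zero, Fin.update_cons_zero]

lemma wedge_cons_smul (c : ℝ) (z : S.Z) (θ : Fin S.m → S.Z) (f : C(S.X, ℝ)) :
    S.wedge (Fin.cons (c • z) θ) f = c * S.wedge (Fin.cons z θ) f := by
  calc S.wedge (Fin.cons (c • z) θ) f
      = S.wedge (Function.update (Fin.cons z θ) 0 (c • z)) f := by rw [Fin.update_cons_zero]
    _ = c * S.wedge (Function.update (Fin.cons z θ) 0 z) f := by
        rw [(S.wedge).map_update_smul]; simp
    _ = c * S.wedge (Fin.cons z θ) f := by rw [Fin.update_cons_zero]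

end PPSetup

namespace PPSetup

variable (S : PPSetup)

/-! ### Block tuples and telescoping -/

/-- block tuple of length `m+1`: `a` copies of `P`, then `b` copies of `Q`, then `R`. -/
def trp (P Q R : S.Z) (a b : ℕ) : Fin (S.m + 1) → S.Z :=
  fun j => if (j : ℕ) < a then P else if (j : ℕ) < a + b then Q else R

/-- block tuple of length `m`. -/
def trm (P Q R : S.Z) (a b : ℕ) : Fin S.m → S.Z :=
  fun j => if (j : ℕ) < a then P else if (j : ℕ) < a + b then Q else R

lemma trm_nonneg {P Q R : S.Z} (hP : 0 ≤ P) (hQ : 0 ≤ Q) (hR : 0 ≤ R) (a b : ℕ) :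
    ∀ j, 0 ≤ S.trm P Q R a b j := by
  intro j; unfold trm; split_ifs <;> assumption

lemma trp_nonneg {P Q R : S.Z} (hP : 0 ≤ P) (hQ : 0 ≤ Q) (hR : 0 ≤ R) (a b : ℕ) :
    ∀ j, 0 ≤ S.trp P Q R a b j := by
  intro j; unfold trp; split_ifs <;> assumption

lemma step1 (P Q R : S.Z) (f : C(S.X, ℝ)) (a b : ℕ) (h : a + b ≤ S.m) :
    S.wedge (S.trp P Q R a (b + 1)) f
      = S.wedge (S.trp P Q R (a + 1) b) f + S.wedge (Fin.cons (Q - P) (S.trm P Q R a b)) f := by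
  have ha : a < S.m + 1 := by omega
  have h1 : S.trp P Q R a (b + 1) = Function.update (S.trp P Q R (a + 1) b) ⟨a, ha⟩ Q := by
    funext j
    by_cases hj : j = (⟨a, ha⟩ : Fin (S.m + 1))
    · subst hj
      rw [Function.update_self]
      simp only [trp]
      rw [if_neg (by omega), if_pos (by omega)]
    · rw [Function.update_of_ne hj]
      have hj' : (j : ℕ) ≠ a := fun hc => hj (Fin.ext hc)
      simp only [trp]
      split_ifs <;> first | rfl | omega
  have h2 : S.trp P Q R (a + 1) b = Function.update (S.trp P Q R (a + 1) b) ⟨a, ha⟩ P := by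
    funext j
    by_cases hj : j = (⟨a, ha⟩ : Fin (S.m + 1))
    · subst hj
      rw [Function.update_self]
      simp only [trp]
      rw [if_pos (by omega)]
    · rw [Function.update_of_ne hj]
  have h3 : Fin.removeNth ⟨a, ha⟩ (S.trp P Q R (a + 1) b) = S.trm P Q R a b := by
    funext j
    show S.trp P Q R (a + 1) b (Fin.succAbove ⟨a, ha⟩ j) = _
    simp only [trp, trm, val_succAbove ⟨a, ha⟩ j]
    split_ifs <;> first | rfl | omega
  rw [h1, show S.wedge (Function.update (S.trp P Q R (a+1) b) ⟨a, ha⟩ Q) f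
      = S.wedge (Function.update (S.trp P Q R (a+1) b) ⟨a, ha⟩ P) f
        + S.wedge (Function.update (S.trp P Q R (a+1) b) ⟨a, ha⟩ (Q - P)) f by
    rw [(S.wedge).map_update_sub]
    simp only [LinearMap.sub_apply]
    ring]
  rw [← h2, S.wedge_update, h3]

lemma step2 (P Q R : S.Z) (f : C(S.X, ℝ)) (a b : ℕ) (h : a + b ≤ S.m) :
    S.wedge (S.trp P Q R a (b + 1)) f
      = S.wedge (S.trp P Q R a b) f + S.wedge (Fin.cons (Q - R) (S.trm P Q R a b)) f := by
  have ha : a + b < S.m + 1 := by omega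
  have h1 : S.trp P Q R a (b + 1) = Function.update (S.trp P Q R a b) ⟨a + b, ha⟩ Q := by
    funext j
    by_cases hj : j = (⟨a + b, ha⟩ : Fin (S.m + 1))
    · subst hj
      rw [Function.update_self]
      simp only [trp]
      rw [if_neg (by omega), if_pos (by omega)]
    · rw [Function.update_of_ne hj]
      have hj' : (j : ℕ) ≠ a + b := fun hc => hj (Fin.ext hc)
      simp only [trp]
      split_ifs <;> first | rfl | omega
  have h2 : S.trp P Q R a b = Function.update (S.trp P Q R a b) ⟨a + b, ha⟩ R := by
    funext j
    by_cases hj : j = (⟨a + b, ha⟩ : Fin (S.m + 1))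
    · subst hj
      rw [Function.update_self]
      simp only [trp]
      rw [if_neg (by omega), if_neg (by omega)]
    · rw [Function.update_of_ne hj]
  have h3 : Fin.removeNth ⟨a + b, ha⟩ (S.trp P Q R a b) = S.trm P Q R a b := by
    funext j
    show S.trp P Q R a b (Fin.succAbove ⟨a + b, ha⟩ j) = _
    simp only [trp, trm, val_succAbove ⟨a + b, ha⟩ j]
    split_ifs <;> first | rfl | omega
  rw [h1, show S.wedge (Function.update (S.trp P Q R a b) ⟨a + b, ha⟩ Q) f
      = S.wedge (Function.update (S.trp P Q R a b) ⟨a + b, ha⟩ R) f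
        + S.wedge (Function.update (S.trp P Q R a b) ⟨a + b, ha⟩ (Q - R)) f by
    rw [(S.wedge).map_update_sub]
    simp only [LinearMap.sub_apply]
    ring]
  rw [← h2, S.wedge_update, h3]

lemma tel1 (P Q R : S.Z) (f : C(S.X, ℝ)) (s : ℕ) (hs : s ≤ S.m + 1) :
    ∀ a, a ≤ s → S.wedge (S.trp P Q R a (s - a)) f
      = S.wedge (S.trp P Q R 0 s) f
        - ∑ r ∈ Finset.range a, S.wedge (Fin.cons (Q - P) (S.trm P Q R r (s - 1 - r))) f := by
  intro a
  induction a with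
  | zero => intro _; simp
  | succ a ih =>
    intro has
    have hstep := S.step1 P Q R f a (s - a - 1) (by omega)
    rw [show s - a - 1 + 1 = s - a by omega] at hstep
    rw [show s - (a + 1) = s - 1 - a by omega]
    rw [show s - a - 1 = s - 1 - a by omega] at hstep
    rw [Finset.sum_range_succ]
    have hih := ih (by omega)
    linarith

lemma tel2 (P Q R : S.Z) (f : C(S.X, ℝ)) (a : ℕ) :
    ∀ b, a + b ≤ S.m + 1 → S.wedge (S.trp P Q R a b) f
      = S.wedge (S.trp P Q R a 0) f
        + ∑ l ∈ Finset.range b, S.wedge (Fin.cons (Q - R) (S.trm P Q R a l)) f := by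
  intro b
  induction b with
  | zero => intro _; simp
  | succ b ih =>
    intro hab
    have hstep := S.step2 P Q R f a b (by omega)
    rw [Finset.sum_range_succ]
    have hih := ih (by omega)
    linarith

/-- the triangle reindexing lemma -/
lemma triangle (N : ℕ) (g : ℕ → ℕ → ℝ) :
    ∑ i ∈ Finset.range (N + 1), ∑ r ∈ Finset.range i, g r (i - 1 - r)
      = ∑ i ∈ Finset.range (N + 1), ∑ l ∈ Finset.range (N - i), g i l := by
  induction N with
  | zero => simp
  | succ N ih =>
    rw [Finset.sum_range_succ, ih]
    have h1 : ∑ i ∈ Finset.range (N + 1 + 1), ∑ l ∈ Finset.range (N + 1 - i), g i l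
        = ∑ i ∈ Finset.range (N + 1), ∑ l ∈ Finset.range (N + 1 - i), g i l := by
      rw [Finset.sum_range_succ]; simp
    rw [h1]
    have h2 : ∀ i ∈ Finset.range (N + 1),
        ∑ l ∈ Finset.range (N + 1 - i), g i l
          = ∑ l ∈ Finset.range (N - i), g i l + g i (N - i) := by
      intro i hi
      have : N + 1 - i = (N - i) + 1 := by
        simp only [Finset.mem_range] at hi; omega
      rw [this, Finset.sum_range_succ]
    rw [Finset.sum_congr rfl h2, Finset.sum_add_distrib]
    congr 1

end PPSetup

namespace PPSetup

variable (S : PPSetup)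

/-! ### The explicit energy formulas -/

lemma epow_eq (ω : S.Z) (φ : S.D) (R : S.Z) :
    S.epow ω φ = ∑ i : Fin (S.m + 2),
      S.wedge (S.trp ω (ω + S.ddc φ) R (i : ℕ) (S.m + 1 - (i : ℕ))) ((φ : C(S.X, ℝ))) := by
  unfold epow epair
  refine Finset.sum_congr rfl fun i _ => ?_
  refine congrArg (fun v => (S.wedge v) ((φ : C(S.X, ℝ)))) ?_
  funext j
  have hv := val_succAbove i j
  have him : (i : ℕ) ≤ S.m + 1 := Fin.is_le i
  simp only [trp, hv]
  by_cases hj : (j : ℕ) < (i : ℕ)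
  · rw [if_pos hj, if_pos (by omega), if_pos hj]
  · rw [if_neg hj, if_neg (by omega), if_neg hj, if_pos (by omega)]

lemma epow_eq' (ω : S.Z) (ψ : S.D) (Q : S.Z) :
    S.epow ω ψ = ∑ i : Fin (S.m + 2),
      S.wedge (S.trp ω Q (ω + S.ddc ψ) (i : ℕ) 0) ((ψ : C(S.X, ℝ))) := by
  unfold epow epair
  refine Finset.sum_congr rfl fun i _ => ?_
  refine congrArg (fun v => (S.wedge v) ((ψ : C(S.X, ℝ)))) ?_
  funext j
  have hv := val_succAbove i j
  simp only [trp, hv]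
  by_cases hj : (j : ℕ) < (i : ℕ)
  · rw [if_pos hj, if_pos (by omega), if_pos (by omega)]
  · rw [if_neg hj, if_neg (by omega), if_neg (by omega), if_neg (by omega)]

/-- The fundamental difference formula for the energy:
`(ω,ψ)^{n+1} - (ω,φ)^{n+1} = ∑_k ∫ (ψ-φ) A^k B^{n-k}`. -/
lemma epow_sub (ω : S.Z) (φ ψ : S.D) :
    S.epow ω ψ - S.epow ω φ
      = ∑ i : Fin (S.m + 2),
          S.wedge (S.trp ω (ω + S.ddc φ) (ω + S.ddc ψ) 0 (i : ℕ))
            (((ψ : C(S.X, ℝ))) - ((φ : C(S.X, ℝ)))) := by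
  set A := ω + S.ddc φ with hA
  set B := ω + S.ddc ψ with hB
  set u : S.D := ψ - φ with hu
  have hcoe : ((u : C(S.X, ℝ))) = ((ψ : C(S.X, ℝ))) - ((φ : C(S.X, ℝ))) := rfl
  have hAω : A - ω = S.ddc φ := by rw [hA]; abel
  have hAB : A - B = -(S.ddc u) := by
    rw [hA, hB, hu, map_sub]; abel
  -- expand epow ψ
  have hψ : S.epow ω ψ = ∑ i : Fin (S.m + 2),
      (S.wedge (S.trp ω A B 0 (i : ℕ)) ((ψ : C(S.X, ℝ)))
        - ∑ r ∈ Finset.range (i : ℕ),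
            S.wedge (Fin.cons (S.ddc φ) (S.trm ω A B r ((i : ℕ) - 1 - r))) ((ψ : C(S.X, ℝ)))) := by
    rw [S.epow_eq' ω ψ A]
    refine Finset.sum_congr rfl fun i _ => ?_
    have h := S.tel1 ω A B ((ψ : C(S.X, ℝ))) (i : ℕ) (Fin.is_le i) (i : ℕ) le_rfl
    rw [Nat.sub_self] at h
    rw [h, hAω]
  -- expand epow φ
  have hφ : S.epow ω φ = ∑ i : Fin (S.m + 2),
      ((S.wedge (S.trp ω A B 0 (i : ℕ)) ((φ : C(S.X, ℝ)))
        - ∑ r ∈ Finset.range (i : ℕ),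
            S.wedge (Fin.cons (S.ddc φ) (S.trm ω A B r ((i : ℕ) - 1 - r))) ((φ : C(S.X, ℝ))))
        + ∑ l ∈ Finset.range (S.m + 1 - (i : ℕ)),
            S.wedge (Fin.cons (-(S.ddc u)) (S.trm ω A B (i : ℕ) l)) ((φ : C(S.X, ℝ)))) := by
    rw [S.epow_eq ω φ B]
    refine Finset.sum_congr rfl fun i _ => ?_
    have h2 := S.tel2 ω A B ((φ : C(S.X, ℝ))) (i : ℕ) (S.m + 1 - (i : ℕ))
      (by have := Fin.is_le i; omega)
    have h1 := S.tel1 ω A B ((φ : C(S.X, ℝ))) (i : ℕ) (Fin.is_le i) (i : ℕ) le_rfl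
    rw [Nat.sub_self] at h1
    rw [h2, h1, hAω, hAB]
  rw [hψ, hφ]
  -- regroup
  have key : ∑ i : Fin (S.m + 2), ∑ r ∈ Finset.range (i : ℕ),
        S.wedge (Fin.cons (S.ddc u) (S.trm ω A B r ((i : ℕ) - 1 - r))) ((φ : C(S.X, ℝ)))
      = ∑ i : Fin (S.m + 2), ∑ l ∈ Finset.range (S.m + 1 - (i : ℕ)),
        S.wedge (Fin.cons (S.ddc u) (S.trm ω A B (i : ℕ) l)) ((φ : C(S.X, ℝ))) := by
    rw [Fin.sum_univ_eq_sum_range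
      (fun i => ∑ r ∈ Finset.range i,
        S.wedge (Fin.cons (S.ddc u) (S.trm ω A B r (i - 1 - r))) ((φ : C(S.X, ℝ)))),
      Fin.sum_univ_eq_sum_range
      (fun i => ∑ l ∈ Finset.range (S.m + 1 - i),
        S.wedge (Fin.cons (S.ddc u) (S.trm ω A B i l)) ((φ : C(S.X, ℝ))))]
    exact triangle (S.m + 1)
      (fun a b => S.wedge (Fin.cons (S.ddc u) (S.trm ω A B a b)) ((φ : C(S.X, ℝ))))
  -- use hodge symmetry on the difference of correction sums
  have hodge : ∀ (T : Fin S.m → S.Z),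
      S.wedge (Fin.cons (S.ddc φ) T) ((ψ : C(S.X, ℝ)))
        - S.wedge (Fin.cons (S.ddc φ) T) ((φ : C(S.X, ℝ)))
      = S.wedge (Fin.cons (S.ddc u) T) ((φ : C(S.X, ℝ))) := by
    intro T
    have h1 : S.wedge (Fin.cons (S.ddc φ) T) ((ψ : C(S.X, ℝ)))
        - S.wedge (Fin.cons (S.ddc φ) T) ((φ : C(S.X, ℝ)))
        = S.wedge (Fin.cons (S.ddc φ) T) ((u : C(S.X, ℝ))) := by
      rw [hcoe, map_sub]
    rw [h1, S.hodge_symm T u φ]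
  calc ∑ i : Fin (S.m + 2),
        (S.wedge (S.trp ω A B 0 (i : ℕ)) ((ψ : C(S.X, ℝ)))
          - ∑ r ∈ Finset.range (i : ℕ),
              S.wedge (Fin.cons (S.ddc φ) (S.trm ω A B r ((i : ℕ) - 1 - r))) ((ψ : C(S.X, ℝ))))
      - ∑ i : Fin (S.m + 2),
        ((S.wedge (S.trp ω A B 0 (i : ℕ)) ((φ : C(S.X, ℝ)))
          - ∑ r ∈ Finset.range (i : ℕ),
              S.wedge (Fin.cons (S.ddc φ) (S.trm ω A B r ((i : ℕ) - 1 - r))) ((φ : C(S.X, ℝ))))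
          + ∑ l ∈ Finset.range (S.m + 1 - (i : ℕ)),
              S.wedge (Fin.cons (-(S.ddc u)) (S.trm ω A B (i : ℕ) l)) ((φ : C(S.X, ℝ))))
      = ∑ i : Fin (S.m + 2),
          (S.wedge (S.trp ω A B 0 (i : ℕ)) ((ψ : C(S.X, ℝ)))
            - S.wedge (S.trp ω A B 0 (i : ℕ)) ((φ : C(S.X, ℝ)))
            - (∑ r ∈ Finset.range (i : ℕ),
                S.wedge (Fin.cons (S.ddc u) (S.trm ω A B r ((i : ℕ) - 1 - r))) ((φ : C(S.X, ℝ))))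
            + ∑ l ∈ Finset.range (S.m + 1 - (i : ℕ)),
                S.wedge (Fin.cons (S.ddc u) (S.trm ω A B (i : ℕ) l)) ((φ : C(S.X, ℝ)))) := by
        rw [← Finset.sum_sub_distrib]
        refine Finset.sum_congr rfl fun i _ => ?_
        have hr : ∑ r ∈ Finset.range (i : ℕ),
              S.wedge (Fin.cons (S.ddc φ) (S.trm ω A B r ((i : ℕ) - 1 - r))) ((ψ : C(S.X, ℝ)))
            - ∑ r ∈ Finset.range (i : ℕ),
              S.wedge (Fin.cons (S.ddc φ) (S.trm ω A B r ((i : ℕ) - 1 - r))) ((φ : C(S.X, ℝ)))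
            = ∑ r ∈ Finset.range (i : ℕ),
              S.wedge (Fin.cons (S.ddc u) (S.trm ω A B r ((i : ℕ) - 1 - r))) ((φ : C(S.X, ℝ))) := by
          rw [← Finset.sum_sub_distrib]
          exact Finset.sum_congr rfl fun r _ => hodge _
        have hl : ∀ l, S.wedge (Fin.cons (-(S.ddc u)) (S.trm ω A B (i : ℕ) l)) ((φ : C(S.X, ℝ)))
            = - S.wedge (Fin.cons (S.ddc u) (S.trm ω A B (i : ℕ) l)) ((φ : C(S.X, ℝ))) := by
          intro l
          have := S.wedge_cons_smul (-1) (S.ddc u) (S.trm ω A B (i : ℕ) l) ((φ : C(S.X, ℝ)))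
          simpa using this
        rw [Finset.sum_congr rfl fun l _ => hl l, Finset.sum_neg_distrib]
        linarith [hr]
    _ = ∑ i : Fin (S.m + 2),
          (S.wedge (S.trp ω A B 0 (i : ℕ)) ((ψ : C(S.X, ℝ)))
            - S.wedge (S.trp ω A B 0 (i : ℕ)) ((φ : C(S.X, ℝ)))) := by
        rw [show ∀ F G H : Fin (S.m + 2) → ℝ, (∑ i, (F i - G i + H i)) = (∑ i, F i) - (∑ i, G i) + (∑ i, H i) from ?_]
        · rw [key]; ring
        · intro F G H
          rw [Finset.sum_add_distrib, Finset.sum_sub_distrib]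
    _ = ∑ i : Fin (S.m + 2),
          S.wedge (S.trp ω A B 0 (i : ℕ)) (((ψ : C(S.X, ℝ))) - ((φ : C(S.X, ℝ)))) := by
        refine Finset.sum_congr rfl fun i _ => ?_
        rw [map_sub]

end PPSetup

namespace PPSetup

variable (S : PPSetup)

/-! ### Nonemptiness and positivity of the volume -/

lemma nonemptyX : Nonempty S.X := by
  by_contra h
  apply S.wedge_ne
  ext θ f
  have hf : f = 0 := by
    ext x
    exact absurd ⟨x⟩ h
  simp [hf]

lemma exists_max (f : C(S.X, ℝ)) : ∃ x0 : S.X, ∀ x, f x ≤ f x0 := by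
  have : Nonempty S.X := S.nonemptyX
  obtain ⟨x0, -, hx0⟩ := isCompact_univ.exists_isMaxOn Set.univ_nonempty
    f.continuous.continuousOn
  rw [isMaxOn_iff] at hx0
  exact ⟨x0, fun x => hx0 x (Set.mem_univ x)⟩

lemma exists_min (f : C(S.X, ℝ)) : ∃ x0 : S.X, ∀ x, f x0 ≤ f x := by
  obtain ⟨x0, hx0⟩ := S.exists_max (-f)
  exact ⟨x0, fun x => by have := hx0 x; simp only [ContinuousMap.neg_apply] at this; linarith⟩

lemma exists_pos_tuple : ∃ σ : Fin (S.m + 1) → S.Z, (∀ j, 0 ≤ σ j) ∧ S.wedge σ ≠ 0 := by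
  by_contra hcon
  push_neg at hcon
  have main : ∀ k : ℕ, ∀ θ : Fin (S.m + 1) → S.Z,
      (∀ j : Fin (S.m + 1), (k : ℕ) ≤ (j : ℕ) → 0 ≤ θ j) → S.wedge θ = 0 := by
    intro k
    induction k with
    | zero =>
      intro θ hθ
      by_contra hne
      exact hne (hcon θ (fun j => hθ j (Nat.zero_le _)))
    | succ k ih =>
      intro θ hθ
      by_cases hk : k ≤ S.m
      · set i : Fin (S.m + 1) := ⟨k, by omega⟩ with hi
        have hmem : θ i ∈ Submodule.span ℝ {z : S.Z | 0 ≤ z} := by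
          rw [S.pos_spans]; exact Submodule.mem_top
        have hz : S.wedge (Function.update θ i (θ i)) = 0 := by
          refine Submodule.span_induction ?_ ?_ ?_ ?_ hmem
          · intro z hz0
            refine ih (Function.update θ i z) ?_
            intro j hj
            by_cases hji : j = i
            · subst hji; rw [Function.update_self]; exact hz0
            · rw [Function.update_of_ne hji]
              refine hθ j ?_
              have : (j : ℕ) ≠ k := fun hc => hji (Fin.ext hc)
              omega
          · exact (S.wedge).map_coord_zero i (Function.update_self i 0 θ)
          · intro x y _ _ hx hy
            rw [(S.wedge).map_update_add, hx, hy, add_zero]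
          · intro a x _ hx
            rw [(S.wedge).map_update_smul, hx, smul_zero]
        rwa [Function.update_eq_self] at hz
      · refine ih θ ?_
        intro j hj
        have : (j : ℕ) ≤ S.m := Fin.is_le j
        omega
  apply S.wedge_ne
  ext θ f
  rw [main (S.m + 1) θ (fun j hj => absurd (Fin.is_le j) (by omega))]
  simp

lemma pos_tuple_one_pos {σ : Fin (S.m + 1) → S.Z} (hσ : ∀ j, 0 ≤ σ j)
    (hne : S.wedge σ ≠ 0) : 0 < S.wedge σ S.one := by
  have h0 : 0 ≤ S.wedge σ S.one := by
    refine S.wedge_pos σ hσ S.one ?_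
    rw [ContinuousMap.le_def]
    intro x
    show (0 : ℝ) ≤ 1
    norm_num
  rcases lt_or_eq_of_le h0 with h | h
  · exact h
  · exfalso
    apply hne
    ext f
    have key : ∀ g : C(S.X, ℝ), 0 ≤ g → S.wedge σ g = 0 := by
      intro g hg
      have hb : ∃ c : ℝ, ∀ x, g x ≤ c := by
        obtain ⟨x0, hx0⟩ := S.exists_max g
        exact ⟨g x0, hx0⟩
      obtain ⟨c, hc⟩ := hb
      have h1 : 0 ≤ S.wedge σ (c • S.one - g) := by
        refine S.wedge_pos σ hσ _ ?_
        rw [ContinuousMap.le_def]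
        intro x
        simp only [ContinuousMap.zero_apply, ContinuousMap.sub_apply, ContinuousMap.smul_apply]
        have : (S.one) x = 1 := rfl
        rw [this]
        have := hc x
        simp only [smul_eq_mul, mul_one]
        linarith
      rw [map_sub, map_smul] at h1
      rw [← h] at h1
      have h2 : 0 ≤ S.wedge σ g := S.wedge_pos σ hσ g hg
      simp only [smul_eq_mul] at h1
      linarith
    -- decompose arbitrary f as difference of nonneg
    have : Nonempty S.X := S.nonemptyX
    obtain ⟨x0, hx0⟩ := S.exists_max (-f)
    have hx0' : ∀ x, -(f x) ≤ -(f x0) := by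
      intro x
      have := hx0 x
      simpa using this
    set c : ℝ := max 0 (-(f x0)) with hc
    have hfc : 0 ≤ f + c • S.one := by
      rw [ContinuousMap.le_def]
      intro x
      have h1 := hx0' x
      have h2 : -(f x0) ≤ c := le_max_right _ _
      simp only [ContinuousMap.zero_apply, ContinuousMap.add_apply, ContinuousMap.smul_apply]
      have h3 : (S.one) x = 1 := rfl
      rw [h3]
      simp only [smul_eq_mul, mul_one]
      linarith
    have h1 := key (f + c • S.one) hfc
    rw [map_add, map_smul] at h1
    rw [← h] at h1
    simp only [smul_eq_mul] at h1
    simp only [LinearMap.zero_apply]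
    linarith

/-- class invariance of integrals of the constant 1 against wedge products -/
lemma wedge_update_ddc_one (b : Fin (S.m + 1) → S.Z) (i : Fin (S.m + 1)) (z : S.Z) (χ : S.D) :
    S.wedge (Function.update b i (z + S.ddc χ)) S.one
      = S.wedge (Function.update b i z) S.one := by
  rw [(S.wedge).map_update_add]
  simp only [LinearMap.add_apply]
  rw [S.wedge_update b i (S.ddc χ), S.wedge_cons_ddc_one]
  ring

lemma Vol_pos (ω : S.Z) (hω : 0 ≤ ω) (hpos : S.cls ω ∈ S.Pos) : 0 < S.Vol ω := by
  obtain ⟨σ, hσ, hne⟩ := S.exists_pos_tuple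
  -- choose for each j an ε and a decomposition
  have hchoice : ∀ j : Fin (S.m + 1), ∃ ε : ℝ, 0 < ε ∧ ∃ θ' : S.Z, 0 ≤ θ' ∧
      ∃ χ : S.D, θ' + ε • σ j = ω + S.ddc χ := by
    intro j
    obtain ⟨ε, hε, hall⟩ := hpos (S.cls (σ j))
    obtain ⟨θ', hθ'pos, hθ'⟩ := hall (-ε) (by rw [abs_neg, abs_of_pos hε])
    refine ⟨ε, hε, θ', hθ'pos, ?_⟩
    have : S.cls θ' = S.cls (ω - ε • σ j) := by
      rw [hθ']
      show Submodule.Quotient.mk _ = Submodule.Quotient.mk _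
      rw [show ω - ε • σ j = ω + (-ε) • σ j by rw [neg_smul]; abel]
    have hdiff : θ' - (ω - ε • σ j) ∈ LinearMap.range S.ddc :=
      (Submodule.Quotient.eq _).mp this
    obtain ⟨χ, hχ⟩ := hdiff
    exact ⟨χ, by rw [hχ]; abel⟩
  choose ε hε θ' hθ'pos χ hχ using hchoice
  -- τ k : replace the first k slots of (const ω) by θ' j + ε j • σ j
  set τ : ℕ → (Fin (S.m + 1) → S.Z) :=
    fun k j => if (j : ℕ) < k then θ' j + ε j • σ j else ω with hτ
  have hτ0 : τ 0 = fun _ => ω := by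
    funext j; simp [hτ]
  have step : ∀ k, k ≤ S.m → S.wedge (τ (k + 1)) S.one = S.wedge (τ k) S.one := by
    intro k hk
    have hik : k < S.m + 1 := by omega
    have e1 : τ (k + 1) = Function.update (τ k) ⟨k, hik⟩ (ω + S.ddc (χ ⟨k, hik⟩)) := by
      funext j
      by_cases hj : j = (⟨k, hik⟩ : Fin (S.m + 1))
      · subst hj
        rw [Function.update_self]
        simp only [hτ]
        rw [if_pos (by omega)]
        exact hχ _
      · rw [Function.update_of_ne hj]
        have hj' : (j : ℕ) ≠ k := fun hc => hj (Fin.ext hc)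
        simp only [hτ]
        split_ifs <;> first | rfl | omega
    have e2 : τ k = Function.update (τ k) ⟨k, hik⟩ ω := by
      funext j
      by_cases hj : j = (⟨k, hik⟩ : Fin (S.m + 1))
      · subst hj
        rw [Function.update_self]
        simp only [hτ]
        rw [if_neg (by omega)]
      · rw [Function.update_of_ne hj]
    rw [e1, S.wedge_update_ddc_one, ← e2]
  have hconst : ∀ k, k ≤ S.m + 1 → S.wedge (τ k) S.one = S.Vol ω := by
    intro k
    induction k with
    | zero => intro _; rw [hτ0]; rfl
    | succ k ih =>
      intro hk
      rw [step k (by omega), ih (by omega)]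
  -- now the monotone replacement
  set ρ : ℕ → (Fin (S.m + 1) → S.Z) :=
    fun k j => if (j : ℕ) < k then ε j • σ j else θ' j + ε j • σ j with hρ
  have hρτ : ρ 0 = τ (S.m + 1) := by
    funext j
    simp only [hρ, hτ]
    rw [if_neg (by omega), if_pos (by exact Nat.lt_of_lt_of_le j.isLt le_rfl)]
  have hstep2 : ∀ k, k ≤ S.m → S.wedge (ρ (k + 1)) S.one ≤ S.wedge (ρ k) S.one := by
    intro k hk
    have hik : k < S.m + 1 := by omega
    have e1 : ρ (k + 1) = Function.update (ρ k) ⟨k, hik⟩ (ε ⟨k, hik⟩ • σ ⟨k, hik⟩) := by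
      funext j
      by_cases hj : j = (⟨k, hik⟩ : Fin (S.m + 1))
      · subst hj; rw [Function.update_self]; simp only [hρ]; rw [if_pos (by omega)]
      · rw [Function.update_of_ne hj]
        have hj' : (j : ℕ) ≠ k := fun hc => hj (Fin.ext hc)
        simp only [hρ]
        split_ifs <;> first | rfl | omega
    have e2 : ρ k = Function.update (ρ k) ⟨k, hik⟩ (θ' ⟨k, hik⟩ + ε ⟨k, hik⟩ • σ ⟨k, hik⟩) := by
      funext j
      by_cases hj : j = (⟨k, hik⟩ : Fin (S.m + 1))
      · subst hj; rw [Function.update_self]; simp only [hρ]; rw [if_neg (by omega)]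
      · rw [Function.update_of_ne hj]
    have hpos1 : 0 ≤ S.wedge (Function.update (ρ k) ⟨k, hik⟩ (θ' ⟨k, hik⟩)) S.one := by
      refine S.wedge_pos _ ?_ S.one ?_
      · intro j
        by_cases hj : j = (⟨k, hik⟩ : Fin (S.m + 1))
        · subst hj; rw [Function.update_self]; exact hθ'pos _
        · rw [Function.update_of_ne hj]
          simp only [hρ]
          have hsm : 0 ≤ ε j • σ j := smul_nonneg (le_of_lt (hε j)) (hσ j)
          split_ifs
          · exact hsm
          · exact add_nonneg (hθ'pos j) hsm
      · rw [ContinuousMap.le_def]; intro x; show (0:ℝ) ≤ 1; norm_num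
    have hsum : S.wedge (ρ k) S.one
        = S.wedge (Function.update (ρ k) ⟨k, hik⟩ (θ' ⟨k, hik⟩)) S.one
          + S.wedge (Function.update (ρ k) ⟨k, hik⟩ (ε ⟨k, hik⟩ • σ ⟨k, hik⟩)) S.one := by
      conv_lhs => rw [e2]
      rw [(S.wedge).map_update_add]
      simp only [LinearMap.add_apply]
    rw [e1, hsum]
    linarith
  have hchain : ∀ k, k ≤ S.m + 1 → S.wedge (ρ k) S.one ≤ S.wedge (ρ 0) S.one := by
    intro k
    induction k with
    | zero => intro _; exact le_rfl
    | succ k ih =>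
      intro hk
      exact le_trans (hstep2 k (by omega)) (ih (by omega))
  have hfinal : ρ (S.m + 1) = fun j => ε j • σ j := by
    funext j
    simp only [hρ]
    rw [if_pos (Nat.lt_of_lt_of_le j.isLt le_rfl)]
  have hval : S.wedge (ρ (S.m + 1)) S.one = (∏ j, ε j) * S.wedge σ S.one := by
    rw [hfinal]
    rw [(S.wedge).map_smul_univ]
    simp
  have h1 : S.wedge (ρ 0) S.one = S.Vol ω := by rw [hρτ, hconst (S.m + 1) le_rfl]
  have h2 : 0 < (∏ j, ε j) * S.wedge σ S.one := by
    have := S.pos_tuple_one_pos hσ hne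
    have hprod : 0 < ∏ j, ε j := Finset.prod_pos (fun j _ => hε j)
    positivity
  have h3 := hchain (S.m + 1) le_rfl
  rw [hval, h1] at h3
  linarith

end PPSetup

namespace PPSetup

variable (S : PPSetup)

/-! ### Basic properties of psh functions and the energy -/

lemma psh_zero {ω : S.Z} (hω : 0 ≤ ω) : (0 : S.D) ∈ S.psh ω := by
  show 0 ≤ ω + S.ddc 0
  rw [map_zero, add_zero]
  exact hω

lemma ddc_constD (c : ℝ) : S.ddc (S.constD c) = 0 := S.ddc_const c

lemma psh_const {ω : S.Z} (hω : 0 ≤ ω) (c : ℝ) : S.constD c ∈ S.psh ω := by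
  show 0 ≤ ω + S.ddc (S.constD c)
  rw [S.ddc_constD c, add_zero]
  exact hω

lemma psh_add_const {ω : S.Z} {φ : S.D} (hφ : φ ∈ S.psh ω) (c : ℝ) :
    φ + S.constD c ∈ S.psh ω := by
  show 0 ≤ ω + S.ddc (φ + S.constD c)
  rw [map_add, S.ddc_constD, add_zero]
  exact hφ

lemma coe_add_constD (φ : S.D) (c : ℝ) :
    ((φ + S.constD c : S.D) : C(S.X, ℝ)) = (φ : C(S.X, ℝ)) + c • S.one := by
  ext x
  simp only [Submodule.coe_add, ContinuousMap.add_apply, ContinuousMap.smul_apply]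
  show (φ : C(S.X, ℝ)) x + c = (φ : C(S.X, ℝ)) x + c • (1 : ℝ)
  simp

lemma one_apply (x : S.X) : S.one x = 1 := rfl

lemma wedge_trp_one (ω : S.Z) (φ : S.D) (R : S.Z) (a : ℕ) (ha : a ≤ S.m + 1) :
    S.wedge (S.trp ω (ω + S.ddc φ) R a (S.m + 1 - a)) S.one = S.Vol ω := by
  have hQP : (ω + S.ddc φ) - ω = S.ddc φ := add_sub_cancel_left ω _
  have hz : ∀ r b, S.wedge (Fin.cons ((ω + S.ddc φ) - ω) (S.trm ω (ω + S.ddc φ) R r b)) S.one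
      = 0 := by
    intro r b
    rw [hQP, S.wedge_cons_ddc_one]
  have h := S.tel1 ω (ω + S.ddc φ) R S.one (S.m + 1) le_rfl a ha
  rw [Finset.sum_eq_zero (fun r _ => hz r _), sub_zero] at h
  have h2 := S.tel1 ω (ω + S.ddc φ) R S.one (S.m + 1) le_rfl (S.m + 1) le_rfl
  rw [Finset.sum_eq_zero (fun r _ => hz r _), sub_zero, Nat.sub_self] at h2
  have h3 : S.trp ω (ω + S.ddc φ) R (S.m + 1) 0 = fun _ => ω := by
    funext j
    simp only [trp]
    rw [if_pos j.isLt]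
  rw [h3] at h2
  have h4 : S.Vol ω = S.wedge (fun _ => ω) S.one := rfl
  rw [h, ← h2, h4]

lemma epow_add_const (ω : S.Z) (φ : S.D) (c : ℝ) :
    S.epow ω (φ + S.constD c) = S.epow ω φ + (S.m + 2 : ℝ) * (c * S.Vol ω) := by
  have hddc : S.ddc (φ + S.constD c) = S.ddc φ := by
    rw [map_add, S.ddc_constD, add_zero]
  rw [S.epow_eq ω (φ + S.constD c) ω, S.epow_eq ω φ ω]
  simp only [hddc, S.coe_add_constD φ c]
  have hterm : ∀ i : Fin (S.m + 2),
      S.wedge (S.trp ω (ω + S.ddc φ) ω (i : ℕ) (S.m + 1 - (i : ℕ)))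
        ((φ : C(S.X, ℝ)) + c • S.one)
      = S.wedge (S.trp ω (ω + S.ddc φ) ω (i : ℕ) (S.m + 1 - (i : ℕ))) ((φ : C(S.X, ℝ)))
        + c * S.Vol ω := by
    intro i
    rw [map_add, map_smul, S.wedge_trp_one ω φ ω (i : ℕ) (Fin.is_le i)]
    simp
  rw [Finset.sum_congr rfl fun i _ => hterm i, Finset.sum_add_distrib]
  congr 1
  rw [Finset.sum_const, Finset.card_univ, Fintype.card_fin, nsmul_eq_mul]
  push_cast
  ring

lemma epow_zero (ω : S.Z) : S.epow ω 0 = 0 := by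
  rw [S.epow_eq ω 0 ω]
  have h : ((0 : S.D) : C(S.X, ℝ)) = 0 := rfl
  simp [h]

lemma denom_pos {ω : S.Z} (hV : 0 < S.Vol ω) : 0 < ((S.m : ℝ) + 2) * S.Vol ω := by
  positivity

lemma En_add_const {ω : S.Z} (hV : 0 < S.Vol ω) (φ : S.D) (c : ℝ) :
    S.En ω (φ + S.constD c) = S.En ω φ + c := by
  unfold En
  rw [S.epow_add_const ω φ c]
  have hd : ((S.m : ℝ) + 2) * S.Vol ω ≠ 0 := ne_of_gt (S.denom_pos hV)
  field_simp

lemma En_zero (ω : S.Z) : S.En ω 0 = 0 := by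
  unfold En
  rw [S.epow_zero]
  simp

lemma En_const {ω : S.Z} (hV : 0 < S.Vol ω) (c : ℝ) : S.En ω (S.constD c) = c := by
  have h := S.En_add_const hV 0 c
  rw [zero_add, S.En_zero] at h
  rw [h, zero_add]

lemma coe_sub (φ ψ : S.D) :
    ((ψ - φ : S.D) : C(S.X, ℝ)) = (ψ : C(S.X, ℝ)) - (φ : C(S.X, ℝ)) := rfl

lemma epow_mono {ω : S.Z} (hω : 0 ≤ ω) {φ ψ : S.D} (hφ : φ ∈ S.psh ω) (hψ : ψ ∈ S.psh ω)
    (hle : (φ : C(S.X, ℝ)) ≤ (ψ : C(S.X, ℝ))) : S.epow ω φ ≤ S.epow ω ψ := by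
  have h := S.epow_sub ω φ ψ
  have hsum : 0 ≤ ∑ i : Fin (S.m + 2),
      S.wedge (S.trp ω (ω + S.ddc φ) (ω + S.ddc ψ) 0 (i : ℕ))
        ((ψ : C(S.X, ℝ)) - (φ : C(S.X, ℝ))) := by
    refine Finset.sum_nonneg fun i _ => ?_
    refine S.wedge_pos _ (S.trp_nonneg hω hφ hψ 0 (i : ℕ)) _ ?_
    rw [ContinuousMap.le_def]
    intro x
    simp only [ContinuousMap.zero_apply, ContinuousMap.sub_apply]
    have := (ContinuousMap.le_def.mp hle) x
    linarith
  linarith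

lemma En_mono {ω : S.Z} (hω : 0 ≤ ω) (hV : 0 < S.Vol ω) {φ ψ : S.D} (hφ : φ ∈ S.psh ω)
    (hψ : ψ ∈ S.psh ω) (hle : (φ : C(S.X, ℝ)) ≤ (ψ : C(S.X, ℝ))) : S.En ω φ ≤ S.En ω ψ := by
  unfold En
  exact (div_le_div_iff_of_pos_right (S.denom_pos hV)).mpr (S.epow_mono hω hφ hψ hle)

end PPSetup

namespace PPSetup

variable (S : PPSetup)

/-! ### Concavity of the energy along affine segments -/

/-- the affine segment from `φ` to `ψ` -/
def cvx (φ ψ : S.D) (t : ℝ) : S.D := φ + t • (ψ - φ)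

lemma cvx_zero (φ ψ : S.D) : S.cvx φ ψ 0 = φ := by
  unfold cvx; rw [zero_smul, add_zero]

lemma cvx_one (φ ψ : S.D) : S.cvx φ ψ 1 = ψ := by
  unfold cvx; rw [one_smul]; abel

lemma cvx_form (ω : S.Z) (φ ψ : S.D) (t : ℝ) :
    ω + S.ddc (S.cvx φ ψ t) = (1 - t) • (ω + S.ddc φ) + t • (ω + S.ddc ψ) := by
  unfold cvx
  rw [map_add, map_smul, map_sub]
  module

lemma cvx_psh {ω : S.Z} {φ ψ : S.D} (hφ : φ ∈ S.psh ω) (hψ : ψ ∈ S.psh ω) {t : ℝ}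
    (ht0 : 0 ≤ t) (ht1 : t ≤ 1) : S.cvx φ ψ t ∈ S.psh ω := by
  show 0 ≤ ω + S.ddc (S.cvx φ ψ t)
  rw [S.cvx_form ω φ ψ t]
  exact add_nonneg (smul_nonneg (by linarith) hφ) (smul_nonneg ht0 hψ)

lemma cvx_sub (φ ψ : S.D) (s t : ℝ) :
    S.cvx φ ψ t - S.cvx φ ψ s = (t - s) • (ψ - φ) := by
  unfold cvx
  module

lemma cvx_ddc_sub (φ ψ : S.D) (s t : ℝ) :
    S.ddc (S.cvx φ ψ s) - S.ddc (S.cvx φ ψ t) = (s - t) • S.ddc (ψ - φ) := by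
  rw [← map_sub, ← map_smul, S.cvx_sub φ ψ t s]

/-- the slope of the energy along the segment -/
def slope (ω : S.Z) (φ ψ : S.D) (s t : ℝ) : ℝ :=
  ∑ k : Fin (S.m + 2),
    S.wedge (S.trp ω (ω + S.ddc (S.cvx φ ψ s)) (ω + S.ddc (S.cvx φ ψ t)) 0 (k : ℕ))
      ((ψ : C(S.X, ℝ)) - (φ : C(S.X, ℝ)))

lemma epow_cvx_sub (ω : S.Z) (φ ψ : S.D) (s t : ℝ) :
    S.epow ω (S.cvx φ ψ t) - S.epow ω (S.cvx φ ψ s) = (t - s) * S.slope ω φ ψ s t := by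
  have h := S.epow_sub ω (S.cvx φ ψ s) (S.cvx φ ψ t)
  have hc : ((S.cvx φ ψ t : S.D) : C(S.X, ℝ)) - ((S.cvx φ ψ s : S.D) : C(S.X, ℝ))
      = (t - s) • ((ψ : C(S.X, ℝ)) - (φ : C(S.X, ℝ))) := by
    rw [← S.coe_sub, S.cvx_sub φ ψ s t]
    rfl
  rw [hc] at h
  rw [h]
  unfold slope
  rw [Finset.mul_sum]
  exact Finset.sum_congr rfl fun k _ => by rw [map_smul]; simp [smul_eq_mul]

lemma hodge_neg_term {ω : S.Z} (hω : 0 ≤ ω) {χ₁ χ₂ : S.D} (h1 : χ₁ ∈ S.psh ω)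
    (h2 : χ₂ ∈ S.psh ω) (u : S.D) (a b : ℕ) :
    S.wedge (Fin.cons (S.ddc u) (S.trm ω (ω + S.ddc χ₁) (ω + S.ddc χ₂) a b))
      ((u : C(S.X, ℝ))) ≤ 0 :=
  S.hodge_neg _ (S.trm_nonneg hω h1 h2 a b) u

lemma slope_term_ge {ω : S.Z} (hω : 0 ≤ ω) {φ ψ : S.D} {s t : ℝ}
    (hs : S.cvx φ ψ s ∈ S.psh ω) (ht : S.cvx φ ψ t ∈ S.psh ω) (hst : s ≤ t)
    (k : ℕ) (hk : k ≤ S.m + 1) :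
    S.wedge (fun _ : Fin (S.m + 1) => ω + S.ddc (S.cvx φ ψ t))
        ((ψ : C(S.X, ℝ)) - (φ : C(S.X, ℝ)))
      ≤ S.wedge (S.trp ω (ω + S.ddc (S.cvx φ ψ s)) (ω + S.ddc (S.cvx φ ψ t)) 0 k)
        ((ψ : C(S.X, ℝ)) - (φ : C(S.X, ℝ))) := by
  set As := ω + S.ddc (S.cvx φ ψ s)
  set At := ω + S.ddc (S.cvx φ ψ t)
  set uC := (ψ : C(S.X, ℝ)) - (φ : C(S.X, ℝ)) with huC
  have h := S.tel2 ω As At uC 0 k (by omega)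
  have h0 : S.trp ω As At 0 0 = fun _ => At := by
    funext j
    simp only [trp]
    rw [if_neg (by omega), if_neg (by omega)]
  have hterm : ∀ l, 0 ≤ S.wedge (Fin.cons (As - At) (S.trm ω As At 0 l)) uC := by
    intro l
    have hAsAt : As - At = (s - t) • S.ddc (ψ - φ) := by
      show (ω + S.ddc (S.cvx φ ψ s)) - (ω + S.ddc (S.cvx φ ψ t)) = _
      rw [add_sub_add_left_eq_sub, S.cvx_ddc_sub φ ψ s t]
    rw [hAsAt, S.wedge_cons_smul]
    have hneg : S.wedge (Fin.cons (S.ddc (ψ - φ)) (S.trm ω As At 0 l)) uC ≤ 0 := by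
      have := S.hodge_neg_term hω hs ht (ψ - φ) 0 l
      rwa [S.coe_sub φ ψ] at this
    have : s - t ≤ 0 := by linarith
    nlinarith [this, hneg]
  rw [h, h0]
  have : 0 ≤ ∑ l ∈ Finset.range k, S.wedge (Fin.cons (As - At) (S.trm ω As At 0 l)) uC :=
    Finset.sum_nonneg fun l _ => hterm l
  linarith

lemma slope_term_le {ω : S.Z} (hω : 0 ≤ ω) {φ ψ : S.D} {t r : ℝ}
    (ht : S.cvx φ ψ t ∈ S.psh ω) (hr : S.cvx φ ψ r ∈ S.psh ω) (htr : t ≤ r)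
    (k : ℕ) (hk : k ≤ S.m + 1) :
    S.wedge (S.trp ω (ω + S.ddc (S.cvx φ ψ t)) (ω + S.ddc (S.cvx φ ψ r)) 0 k)
        ((ψ : C(S.X, ℝ)) - (φ : C(S.X, ℝ)))
      ≤ S.wedge (fun _ : Fin (S.m + 1) => ω + S.ddc (S.cvx φ ψ t))
        ((ψ : C(S.X, ℝ)) - (φ : C(S.X, ℝ))) := by
  set At := ω + S.ddc (S.cvx φ ψ t)
  set Ar := ω + S.ddc (S.cvx φ ψ r)
  set uC := (ψ : C(S.X, ℝ)) - (φ : C(S.X, ℝ)) with huC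
  have hall := S.tel2 ω At Ar uC 0 (S.m + 1) (by omega)
  have hk2 := S.tel2 ω At Ar uC 0 k (by omega)
  have h0 : S.trp ω At Ar 0 (S.m + 1) = fun _ => At := by
    funext j
    simp only [trp]
    rw [if_neg (by omega), if_pos (by simpa using j.isLt)]
  have hterm : ∀ l, 0 ≤ S.wedge (Fin.cons (At - Ar) (S.trm ω At Ar 0 l)) uC := by
    intro l
    have hAtAr : At - Ar = (t - r) • S.ddc (ψ - φ) := by
      show (ω + S.ddc (S.cvx φ ψ t)) - (ω + S.ddc (S.cvx φ ψ r)) = _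
      rw [add_sub_add_left_eq_sub, S.cvx_ddc_sub φ ψ t r]
    rw [hAtAr, S.wedge_cons_smul]
    have hneg : S.wedge (Fin.cons (S.ddc (ψ - φ)) (S.trm ω At Ar 0 l)) uC ≤ 0 := by
      have := S.hodge_neg_term hω ht hr (ψ - φ) 0 l
      rwa [S.coe_sub φ ψ] at this
    have : t - r ≤ 0 := by linarith
    nlinarith [this, hneg]
  rw [← h0, hall, hk2]
  have hsub : ∑ l ∈ Finset.range k, S.wedge (Fin.cons (At - Ar) (S.trm ω At Ar 0 l)) uC
      ≤ ∑ l ∈ Finset.range (S.m + 1), S.wedge (Fin.cons (At - Ar) (S.trm ω At Ar 0 l)) uC := by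
    refine Finset.sum_le_sum_of_subset_of_nonneg ?_ fun l _ _ => hterm l
    exact Finset.range_subset_range.mpr hk
  linarith

lemma slope_mono {ω : S.Z} (hω : 0 ≤ ω) {φ ψ : S.D} {s t r : ℝ}
    (hs : S.cvx φ ψ s ∈ S.psh ω) (ht : S.cvx φ ψ t ∈ S.psh ω) (hr : S.cvx φ ψ r ∈ S.psh ω)
    (hst : s ≤ t) (htr : t ≤ r) :
    S.slope ω φ ψ t r ≤ S.slope ω φ ψ s t := by
  set W := S.wedge (fun _ : Fin (S.m + 1) => ω + S.ddc (S.cvx φ ψ t))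
    ((ψ : C(S.X, ℝ)) - (φ : C(S.X, ℝ)))
  have h1 : (S.m + 2 : ℝ) * W ≤ S.slope ω φ ψ s t := by
    unfold slope
    calc (S.m + 2 : ℝ) * W = ∑ _k : Fin (S.m + 2), W := by
          rw [Finset.sum_const, Finset.card_univ, Fintype.card_fin, nsmul_eq_mul]
          push_cast; ring
      _ ≤ _ := Finset.sum_le_sum fun k _ => S.slope_term_ge hω hs ht hst (k : ℕ) (Fin.is_le k)
  have h2 : S.slope ω φ ψ t r ≤ (S.m + 2 : ℝ) * W := by
    unfold slope
    calc ∑ k : Fin (S.m + 2), S.wedge (S.trp ω (ω + S.ddc (S.cvx φ ψ t))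
            (ω + S.ddc (S.cvx φ ψ r)) 0 (k : ℕ)) ((ψ : C(S.X, ℝ)) - (φ : C(S.X, ℝ)))
        ≤ ∑ _k : Fin (S.m + 2), W :=
          Finset.sum_le_sum fun k _ => S.slope_term_le hω ht hr htr (k : ℕ) (Fin.is_le k)
      _ = (S.m + 2 : ℝ) * W := by
          rw [Finset.sum_const, Finset.card_univ, Fintype.card_fin, nsmul_eq_mul]
          push_cast; ring
  linarith

lemma epow_concave {ω : S.Z} (hω : 0 ≤ ω) {φ ψ : S.D} (hφ : φ ∈ S.psh ω) (hψ : ψ ∈ S.psh ω)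
    {t : ℝ} (ht0 : 0 ≤ t) (ht1 : t ≤ 1) :
    t * S.epow ω ψ + (1 - t) * S.epow ω φ ≤ S.epow ω (S.cvx φ ψ t) := by
  rcases eq_or_lt_of_le ht0 with h0 | h0
  · rw [← h0, S.cvx_zero]; simp
  rcases eq_or_lt_of_le ht1 with h1 | h1
  · rw [h1, S.cvx_one]; simp
  have hφ' : S.cvx φ ψ 0 ∈ S.psh ω := by rw [S.cvx_zero]; exact hφ
  have hψ' : S.cvx φ ψ 1 ∈ S.psh ω := by rw [S.cvx_one]; exact hψ
  have htp : S.cvx φ ψ t ∈ S.psh ω := S.cvx_psh hφ hψ ht0 ht1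
  have e1 := S.epow_cvx_sub ω φ ψ 0 t
  have e2 := S.epow_cvx_sub ω φ ψ t 1
  rw [S.cvx_zero] at e1
  rw [S.cvx_one] at e2
  have hm := S.slope_mono hω hφ' htp hψ' ht0 ht1
  simp only [sub_zero] at e1
  nlinarith [mul_le_mul_of_nonneg_left hm (mul_nonneg (le_of_lt h0) (by linarith : (0:ℝ) ≤ 1 - t))]

lemma En_concave {ω : S.Z} (hω : 0 ≤ ω) (hV : 0 < S.Vol ω) {φ ψ : S.D} (hφ : φ ∈ S.psh ω)
    (hψ : ψ ∈ S.psh ω) {t : ℝ} (ht0 : 0 ≤ t) (ht1 : t ≤ 1) :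
    t * S.En ω ψ + (1 - t) * S.En ω φ ≤ S.En ω (S.cvx φ ψ t) := by
  unfold En
  rw [mul_div_assoc', mul_div_assoc', ← add_div]
  exact (div_le_div_iff_of_pos_right (S.denom_pos hV)).mpr (S.epow_concave hω hφ hψ ht0 ht1)

end PPSetup

namespace PPSetup

variable (S : PPSetup)

/-! ### Properties of the extended energy -/

lemma EnExt_set_nonempty {ω : S.Z} (hω : 0 ≤ ω) (f : C(S.X, ℝ)) :
    {x : ℝ | ∃ φ ∈ S.psh ω, (φ : C(S.X, ℝ)) ≤ f ∧ x = S.En ω φ}.Nonempty := by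
  obtain ⟨x0, hx0⟩ := S.exists_min f
  refine ⟨S.En ω (S.constD (f x0)), S.constD (f x0), S.psh_const hω _, ?_, rfl⟩
  rw [ContinuousMap.le_def]
  intro x
  exact hx0 x

lemma EnExt_set_bddAbove {ω : S.Z} (hω : 0 ≤ ω) (hV : 0 < S.Vol ω) (f : C(S.X, ℝ)) :
    BddAbove {x : ℝ | ∃ φ ∈ S.psh ω, (φ : C(S.X, ℝ)) ≤ f ∧ x = S.En ω φ} := by
  obtain ⟨x1, hx1⟩ := S.exists_max f
  refine ⟨f x1, fun x hx => ?_⟩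
  obtain ⟨φ, hφ, hle, rfl⟩ := hx
  have h1 : (φ : C(S.X, ℝ)) ≤ ((S.constD (f x1) : S.D) : C(S.X, ℝ)) := by
    rw [ContinuousMap.le_def]
    intro x
    exact le_trans ((ContinuousMap.le_def.mp hle) x) (hx1 x)
  have := S.En_mono hω hV hφ (S.psh_const hω (f x1)) h1
  rwa [S.En_const hV] at this

lemma En_le_EnExt {ω : S.Z} (hω : 0 ≤ ω) (hV : 0 < S.Vol ω) {f : C(S.X, ℝ)} {φ : S.D}
    (hφ : φ ∈ S.psh ω) (hle : (φ : C(S.X, ℝ)) ≤ f) : S.En ω φ ≤ S.EnExt ω f :=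
  le_csSup (S.EnExt_set_bddAbove hω hV f) ⟨φ, hφ, hle, rfl⟩

lemma EnExt_le {ω : S.Z} (hω : 0 ≤ ω) {f : C(S.X, ℝ)} {y : ℝ}
    (h : ∀ φ ∈ S.psh ω, (φ : C(S.X, ℝ)) ≤ f → S.En ω φ ≤ y) : S.EnExt ω f ≤ y := by
  refine csSup_le (S.EnExt_set_nonempty hω f) ?_
  rintro x ⟨φ, hφ, hle, rfl⟩
  exact h φ hφ hle

lemma EnExt_mono {ω : S.Z} (hω : 0 ≤ ω) (hV : 0 < S.Vol ω) {f g : C(S.X, ℝ)} (hfg : f ≤ g) :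
    S.EnExt ω f ≤ S.EnExt ω g := by
  refine S.EnExt_le hω fun φ hφ hle => ?_
  exact S.En_le_EnExt hω hV hφ (le_trans hle hfg)

lemma EnExt_psh {ω : S.Z} (hω : 0 ≤ ω) (hV : 0 < S.Vol ω) {φ : S.D} (hφ : φ ∈ S.psh ω) :
    S.EnExt ω ((φ : C(S.X, ℝ))) = S.En ω φ := by
  refine le_antisymm ?_ (S.En_le_EnExt hω hV hφ le_rfl)
  refine S.EnExt_le hω fun ψ hψ hle => ?_
  exact S.En_mono hω hV hψ hφ hle

lemma EnExt_add_const {ω : S.Z} (hω : 0 ≤ ω) (hV : 0 < S.Vol ω) (f : C(S.X, ℝ)) (c : ℝ) :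
    S.EnExt ω (f + c • S.one) = S.EnExt ω f + c := by
  have key : ∀ (g : C(S.X, ℝ)) (d : ℝ), S.EnExt ω (g + d • S.one) ≤ S.EnExt ω g + d := by
    intro g d
    refine S.EnExt_le hω fun φ hφ hle => ?_
    have hψ : φ + S.constD (-d) ∈ S.psh ω := S.psh_add_const hφ (-d)
    have hco := S.coe_add_constD φ (-d)
    have hle2 : ((φ + S.constD (-d) : S.D) : C(S.X, ℝ)) ≤ g := by
      rw [hco, ContinuousMap.le_def]
      intro x
      have := (ContinuousMap.le_def.mp hle) x
      simp only [ContinuousMap.add_apply, ContinuousMap.smul_apply, smul_eq_mul,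
        S.one_apply] at this ⊢
      linarith
    have hEn := S.En_le_EnExt hω hV hψ hle2
    rw [S.En_add_const hV φ (-d)] at hEn
    linarith
  refine le_antisymm (key f c) ?_
  have h2 := key (f + c • S.one) (-c)
  have he : (f + c • S.one) + (-c) • S.one = f := by
    ext x
    simp [smul_eq_mul]
  rw [he] at h2
  linarith

lemma cvx_coe (φ ψ : S.D) (t : ℝ) :
    ((S.cvx φ ψ t : S.D) : C(S.X, ℝ))
      = (φ : C(S.X, ℝ)) + t • ((ψ : C(S.X, ℝ)) - (φ : C(S.X, ℝ))) := rfl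

lemma EnExt_concave {ω : S.Z} (hω : 0 ≤ ω) (hV : 0 < S.Vol ω) (a b : C(S.X, ℝ)) {t : ℝ}
    (ht0 : 0 ≤ t) (ht1 : t ≤ 1) :
    t * S.EnExt ω b + (1 - t) * S.EnExt ω a ≤ S.EnExt ω (a + t • (b - a)) := by
  rcases eq_or_lt_of_le ht0 with h0 | h0
  · rw [← h0]
    simp
  rcases eq_or_lt_of_le ht1 with h1 | h1
  · rw [h1]
    have : a + (1 : ℝ) • (b - a) = b := by
      ext x; simp
    rw [this]
    simp
  -- main case 0 < t < 1
  have key : ∀ φ ∈ S.psh ω, (φ : C(S.X, ℝ)) ≤ a → ∀ ψ ∈ S.psh ω, (ψ : C(S.X, ℝ)) ≤ b →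
      t * S.En ω ψ + (1 - t) * S.En ω φ ≤ S.EnExt ω (a + t • (b - a)) := by
    intro φ hφ hlea ψ hψ hleb
    have hcvx : S.cvx φ ψ t ∈ S.psh ω := S.cvx_psh hφ hψ ht0 ht1
    have hle : ((S.cvx φ ψ t : S.D) : C(S.X, ℝ)) ≤ a + t • (b - a) := by
      rw [S.cvx_coe, ContinuousMap.le_def]
      intro x
      simp only [ContinuousMap.add_apply, ContinuousMap.smul_apply, ContinuousMap.sub_apply,
        smul_eq_mul]
      have h1 := (ContinuousMap.le_def.mp hlea) x
      have h2 := (ContinuousMap.le_def.mp hleb) x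
      nlinarith
    calc t * S.En ω ψ + (1 - t) * S.En ω φ ≤ S.En ω (S.cvx φ ψ t) :=
          S.En_concave hω hV hφ hψ ht0 ht1
      _ ≤ S.EnExt ω (a + t • (b - a)) := S.En_le_EnExt hω hV hcvx hle
  have step1 : ∀ ψ ∈ S.psh ω, (ψ : C(S.X, ℝ)) ≤ b →
      t * S.En ω ψ + (1 - t) * S.EnExt ω a ≤ S.EnExt ω (a + t • (b - a)) := by
    intro ψ hψ hleb
    have hEa : S.EnExt ω a ≤ (S.EnExt ω (a + t • (b - a)) - t * S.En ω ψ) / (1 - t) := by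
      refine S.EnExt_le hω fun φ hφ hlea => ?_
      rw [le_div_iff₀ (by linarith : (0:ℝ) < 1 - t)]
      have := key φ hφ hlea ψ hψ hleb
      linarith [this]
    rw [le_div_iff₀ (by linarith : (0:ℝ) < 1 - t)] at hEa
    linarith [hEa]
  have hEb : S.EnExt ω b ≤ (S.EnExt ω (a + t • (b - a)) - (1 - t) * S.EnExt ω a) / t := by
    refine S.EnExt_le hω fun ψ hψ hleb => ?_
    rw [le_div_iff₀ h0]
    have := step1 ψ hψ hleb
    linarith [this]
  rw [le_div_iff₀ h0] at hEb
  linarith [hEb]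

end PPSetup

namespace PPSetup

variable (S : PPSetup)

/-! ### Hahn–Banach construction of the optimal measure -/

lemma lin_mono {μ : C(S.X, ℝ) →ₗ[ℝ] ℝ} (hp : ∀ f : C(S.X, ℝ), 0 ≤ f → 0 ≤ μ f)
    {f g : C(S.X, ℝ)} (h : f ≤ g) : μ f ≤ μ g := by
  have h0 : 0 ≤ g - f := by
    rw [ContinuousMap.le_def]
    intro x
    have := (ContinuousMap.le_def.mp h) x
    simp only [ContinuousMap.zero_apply, ContinuousMap.sub_apply]
    linarith
  have := hp (g - f) h0
  rw [map_sub] at this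
  linarith

lemma exists_supergrad {ω : S.Z} (hω : 0 ≤ ω) (hV : 0 < S.Vol ω) (f₀ : C(S.X, ℝ)) :
    ∃ ν : C(S.X, ℝ) →ₗ[ℝ] ℝ,
      (∀ h : C(S.X, ℝ), S.EnExt ω (f₀ + h) - S.EnExt ω f₀ ≤ ν h) ∧ S.isProb ν := by
  set E : C(S.X, ℝ) → ℝ := fun h => S.EnExt ω (f₀ + h) with hE
  have hconc : ∀ (x y : C(S.X, ℝ)) (t : ℝ), 0 ≤ t → t ≤ 1 →
      t * E y + (1 - t) * E x ≤ E (x + t • (y - x)) := by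
    intro x y t ht0 ht1
    have h := S.EnExt_concave hω hV (f₀ + x) (f₀ + y) ht0 ht1
    have he : (f₀ + x) + t • ((f₀ + y) - (f₀ + x)) = f₀ + (x + t • (y - x)) := by
      ext p
      simp only [ContinuousMap.add_apply, ContinuousMap.smul_apply, ContinuousMap.sub_apply,
        smul_eq_mul]
      ring
    rwa [he] at h
  -- the sublinear functional
  set pset : C(S.X, ℝ) → Set ℝ :=
    fun h => {y | ∃ t : ℝ, 0 < t ∧ y = (E 0 - E (-(t • h))) / t} with hpset
  set p : C(S.X, ℝ) → ℝ := fun h => sInf (pset h) with hp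
  have pset_ne : ∀ h, (pset h).Nonempty := fun h => ⟨_, 1, one_pos, rfl⟩
  have h_lb : ∀ h, ∀ y ∈ pset h, E h - E 0 ≤ y := by
    rintro h y ⟨t, ht, rfl⟩
    rw [le_div_iff₀ ht]
    have h1t : (0:ℝ) < 1 + t := by linarith
    set l : ℝ := t / (1 + t) with hl
    have hl0 : 0 ≤ l := by positivity
    have hl1 : l ≤ 1 := by
      rw [hl, div_le_one h1t]; linarith
    have he : -(t • h) + l • (h - -(t • h)) = 0 := by
      ext q
      simp only [ContinuousMap.add_apply, ContinuousMap.smul_apply, ContinuousMap.sub_apply,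
        ContinuousMap.neg_apply, ContinuousMap.zero_apply, smul_eq_mul, hl]
      field_simp
      ring
    have hc := hconc (-(t • h)) h l hl0 hl1
    rw [he] at hc
    -- hc : l * E h + (1 - l) * E (-(t • h)) ≤ E 0
    have hle : l * (1 + t) = t := by rw [hl]; field_simp
    have hle2 : (1 - l) * (1 + t) = 1 := by rw [hl]; field_simp; ring
    have hmul := mul_le_mul_of_nonneg_right hc (le_of_lt h1t)
    have hexp : (l * E h + (1 - l) * E (-(t • h))) * (1 + t)
        = t * E h + E (-(t • h)) := by
      calc (l * E h + (1 - l) * E (-(t • h))) * (1 + t)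
          = (l * (1 + t)) * E h + ((1 - l) * (1 + t)) * E (-(t • h)) := by ring
        _ = t * E h + E (-(t • h)) := by rw [hle, hle2]; ring
    rw [hexp] at hmul
    nlinarith [hmul]
  have p_bdd : ∀ h, BddBelow (pset h) := fun h => ⟨E h - E 0, fun y hy => h_lb h y hy⟩
  have cE_le_p : ∀ h, E h - E 0 ≤ p h := fun h => le_csInf (pset_ne h) (h_lb h)
  have p_le : ∀ (h : C(S.X, ℝ)) (t : ℝ), 0 < t → p h ≤ (E 0 - E (-(t • h))) / t :=
    fun h t ht => csInf_le (p_bdd h) ⟨t, ht, rfl⟩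
  have slope_mono : ∀ (h : C(S.X, ℝ)) (s s' : ℝ), 0 < s → s ≤ s' →
      (E 0 - E (-(s • h))) / s ≤ (E 0 - E (-(s' • h))) / s' := by
    intro h s s' hs hss
    have hs' : (0:ℝ) < s' := lt_of_lt_of_le hs hss
    set l : ℝ := s / s' with hl
    have hl0 : 0 ≤ l := by positivity
    have hl1 : l ≤ 1 := by rw [hl, div_le_one hs']; linarith
    have he : (0 : C(S.X, ℝ)) + l • (-(s' • h) - 0) = -(s • h) := by
      ext q
      simp only [ContinuousMap.add_apply, ContinuousMap.smul_apply, ContinuousMap.sub_apply,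
        ContinuousMap.neg_apply, ContinuousMap.zero_apply, smul_eq_mul, hl]
      field_simp
      ring
    have hc := hconc 0 (-(s' • h)) l hl0 hl1
    rw [he] at hc
    -- hc : l * E (-(s' • h)) + (1 - l) * E 0 ≤ E (-(s • h))
    rw [div_le_div_iff₀ hs hs']
    have hls : l * s' = s := by rw [hl]; field_simp
    have hmul := mul_le_mul_of_nonneg_right hc (le_of_lt hs')
    have hexp : (l * E (-(s' • h)) + (1 - l) * E 0) * s'
        = s * E (-(s' • h)) + (s' - s) * E 0 := by
      calc (l * E (-(s' • h)) + (1 - l) * E 0) * s'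
          = (l * s') * E (-(s' • h)) + (s' - l * s') * E 0 := by ring
        _ = s * E (-(s' • h)) + (s' - s) * E 0 := by rw [hls]
    rw [hexp] at hmul
    nlinarith [hmul]
  have p_subadd : ∀ h₁ h₂, p (h₁ + h₂) ≤ p h₁ + p h₂ := by
    intro h₁ h₂
    refine le_of_forall_pos_le_add ?_
    intro ε hε
    obtain ⟨y₁, hy₁mem, hy₁⟩ := exists_lt_of_csInf_lt (pset_ne h₁)
      (lt_add_of_pos_right (p h₁) (by linarith : (0:ℝ) < ε/2))
    obtain ⟨y₂, hy₂mem, hy₂⟩ := exists_lt_of_csInf_lt (pset_ne h₂)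
      (lt_add_of_pos_right (p h₂) (by linarith : (0:ℝ) < ε/2))
    obtain ⟨t₁, ht₁, rfl⟩ := hy₁mem
    obtain ⟨t₂, ht₂, rfl⟩ := hy₂mem
    set t0 : ℝ := min t₁ t₂ / 2 with ht0def
    have ht0 : 0 < t0 := by
      rw [ht0def]
      have := lt_min ht₁ ht₂
      positivity
    have h2t0 : 0 < 2 * t0 := by linarith
    have hmid : E 0 - E (-(t0 • (h₁ + h₂)))
        ≤ ((E 0 - E (-((2 * t0) • h₁))) + (E 0 - E (-((2 * t0) • h₂)))) / 2 := by
      have he : -((2 * t0) • h₁) + (1/2 : ℝ) • (-((2 * t0) • h₂) - -((2 * t0) • h₁))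
          = -(t0 • (h₁ + h₂)) := by
        ext q
        simp only [ContinuousMap.add_apply, ContinuousMap.smul_apply, ContinuousMap.sub_apply,
          ContinuousMap.neg_apply, smul_eq_mul]
        ring
      have hc := hconc (-((2 * t0) • h₁)) (-((2 * t0) • h₂)) (1/2) (by norm_num) (by norm_num)
      rw [he] at hc
      linarith
    have key : p (h₁ + h₂) ≤ (E 0 - E (-((2 * t0) • h₁))) / (2 * t0)
        + (E 0 - E (-((2 * t0) • h₂))) / (2 * t0) := by
      calc p (h₁ + h₂) ≤ (E 0 - E (-(t0 • (h₁ + h₂)))) / t0 := p_le _ t0 ht0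
        _ ≤ (((E 0 - E (-((2 * t0) • h₁))) + (E 0 - E (-((2 * t0) • h₂)))) / 2) / t0 := by
            exact (div_le_div_iff_of_pos_right ht0).mpr hmid
        _ = (E 0 - E (-((2 * t0) • h₁))) / (2 * t0)
            + (E 0 - E (-((2 * t0) • h₂))) / (2 * t0) := by
            field_simp
    have hm1 : (E 0 - E (-((2 * t0) • h₁))) / (2 * t0) ≤ (E 0 - E (-(t₁ • h₁))) / t₁ := by
      refine slope_mono h₁ (2 * t0) t₁ h2t0 ?_
      rw [ht0def]
      have := min_le_left t₁ t₂
      linarith [min_le_left t₁ t₂]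
    have hm2 : (E 0 - E (-((2 * t0) • h₂))) / (2 * t0) ≤ (E 0 - E (-(t₂ • h₂))) / t₂ := by
      refine slope_mono h₂ (2 * t0) t₂ h2t0 ?_
      rw [ht0def]
      linarith [min_le_right t₁ t₂]
    linarith
  have p_scale : ∀ (c : ℝ), 0 < c → ∀ h, p (c • h) ≤ c * p h := by
    intro c hc h
    have step : ∀ y ∈ pset h, p (c • h) ≤ c * y := by
      rintro y ⟨t, ht, rfl⟩
      have htc : 0 < t / c := by positivity
      have he : -((t / c) • (c • h)) = -(t • h) := by
        ext q
        simp only [ContinuousMap.neg_apply, ContinuousMap.smul_apply, smul_eq_mul]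
        field_simp
      have := p_le (c • h) (t / c) htc
      rw [he] at this
      calc p (c • h) ≤ (E 0 - E (-(t • h))) / (t / c) := this
        _ = c * ((E 0 - E (-(t • h))) / t) := by
            field_simp
    have : p (c • h) / c ≤ p h := by
      refine le_csInf (pset_ne h) ?_
      intro y hy
      rw [div_le_iff₀ hc]
      calc p (c • h) ≤ c * y := step y hy
        _ = y * c := by ring
    rw [div_le_iff₀ hc] at this
    linarith [this]
  have p_hom : ∀ (c : ℝ), 0 < c → ∀ h, p (c • h) = c * p h := by
    intro c hc h
    refine le_antisymm (p_scale c hc h) ?_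
    have h2 := p_scale c⁻¹ (by positivity) (c • h)
    have he : c⁻¹ • (c • h) = h := by
      rw [smul_smul, inv_mul_cancel₀ (ne_of_gt hc), one_smul]
    rw [he] at h2
    have := mul_le_mul_of_nonneg_left h2 (le_of_lt hc)
    rw [← mul_assoc, mul_inv_cancel₀ (ne_of_gt hc), one_mul] at this
    linarith
  have p_zero_nonneg : 0 ≤ p 0 := by
    refine le_csInf (pset_ne 0) ?_
    rintro y ⟨t, ht, rfl⟩
    have : -(t • (0 : C(S.X, ℝ))) = 0 := by simp
    rw [this]
    simp
  -- Hahn-Banach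
  obtain ⟨ν, -, hν⟩ := exists_extension_of_le_sublinear
    (⟨⊥, 0⟩ : C(S.X, ℝ) →ₗ.[ℝ] ℝ) p p_hom p_subadd
    (by
      rintro ⟨x, hx⟩
      have hx0 : x = 0 := by simpa using hx
      subst hx0
      simpa using p_zero_nonneg)
  have hsuper : ∀ h : C(S.X, ℝ), E h - E 0 ≤ ν h := by
    intro h
    have h1 : p (-h) ≤ E 0 - E h := by
      have := p_le (-h) 1 one_pos
      have he : -((1:ℝ) • (-h)) = h := by simp
      rw [he, div_one] at this
      exact this
    have h2 : ν (-h) ≤ p (-h) := hν (-h)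
    rw [map_neg] at h2
    linarith
  have hE0 : E 0 = S.EnExt ω f₀ := by rw [hE]; simp
  refine ⟨ν, ?_, ?_, ?_⟩
  · intro h
    have := hsuper h
    rwa [hE0] at this
  · -- positivity
    intro g hg
    have h1 := hsuper g
    have h2 : E 0 ≤ E g := by
      rw [hE]
      refine S.EnExt_mono hω hV ?_
      rw [ContinuousMap.le_def]
      intro x
      have := (ContinuousMap.le_def.mp hg) x
      simp only [ContinuousMap.add_apply, ContinuousMap.zero_apply] at this ⊢
      linarith
    linarith
  · -- normalization
    have hval : ∀ c : ℝ, c ≤ c * ν S.one := by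
      intro c
      have h1 := hsuper (c • S.one)
      have h2 : E (c • S.one) = E 0 + c := by
        show S.EnExt ω (f₀ + c • S.one) = S.EnExt ω (f₀ + 0) + c
        rw [add_zero, S.EnExt_add_const hω hV f₀ c]
      rw [h2, map_smul] at h1
      simpa using h1
    have ha := hval 1
    have hb := hval (-1)
    linarith

end PPSetup

/-- Legendre duality between the extended energy Ẽ_ω on C⁰(X) and the energy
J_ω on measures: Ẽ_ω(f) = inf_ν (J_ω(ν) + ∫f dν) and J_ω(μ) = sup_g (Ẽ_ω(g) − ∫g dμ)
(the latter as an equality in [0,∞], i.e. agreement of boundedness and of suprema). -/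
theorem statement8 (S : PPSetup) (ω : S.Z) (hω : 0 ≤ ω) (hpos : S.cls ω ∈ S.Pos) :
    (∀ f : C(S.X, ℝ),
      S.EnExt ω f =
        sInf {x : ℝ | ∃ ν : S.M, S.finEnergy ω ν.1 ∧ x = S.Jmes ω ν.1 + ν.1 f}) ∧
    ∀ μ : S.M,
      (S.finEnergy ω μ.1 ↔
        BddAbove {x : ℝ | ∃ g : C(S.X, ℝ), x = S.EnExt ω g - μ.1 g}) ∧
      S.Jmes ω μ.1 = sSup {x : ℝ | ∃ g : C(S.X, ℝ), x = S.EnExt ω g - μ.1 g} := by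
  have hV : 0 < S.Vol ω := S.Vol_pos ω hω hpos
  have Jset_ne : ∀ μ : C(S.X, ℝ) →ₗ[ℝ] ℝ, (S.Jset ω μ).Nonempty :=
    fun μ => ⟨_, 0, S.psh_zero hω, rfl⟩
  -- the "easy" inequality: Ẽ(f) ≤ J(ν) + ν(f) for probability measures ν of finite energy
  have easy : ∀ (f : C(S.X, ℝ)) (ν : S.M), S.finEnergy ω ν.1 →
      S.EnExt ω f ≤ S.Jmes ω ν.1 + ν.1 f := by
    intro f ν hfin
    refine S.EnExt_le hω fun φ hφ hle => ?_
    have hJ : S.En ω φ - ν.1 ((φ : C(S.X, ℝ))) ≤ S.Jmes ω ν.1 :=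
      le_csSup hfin ⟨φ, hφ, rfl⟩
    have hm : ν.1 ((φ : C(S.X, ℝ))) ≤ ν.1 f := S.lin_mono ν.2.1 hle
    linarith
  constructor
  · -- first Legendre duality formula
    intro f
    obtain ⟨ν, hsuper, hprob⟩ := S.exists_supergrad hω hV f
    have key2 : ∀ φ ∈ S.psh ω,
        S.En ω φ - ν ((φ : C(S.X, ℝ))) ≤ S.EnExt ω f - ν f := by
      intro φ hφ
      have h1 : S.En ω φ ≤ S.EnExt ω ((φ : C(S.X, ℝ))) := S.En_le_EnExt hω hV hφ le_rfl
      have h2 := hsuper (((φ : C(S.X, ℝ))) - f)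
      have he : f + (((φ : C(S.X, ℝ))) - f) = ((φ : C(S.X, ℝ))) := by
        rw [add_sub_cancel]
      rw [he, map_sub] at h2
      linarith
    have hfinν : S.finEnergy ω ν := by
      refine ⟨S.EnExt ω f - ν f, ?_⟩
      rintro x ⟨φ, hφ, rfl⟩
      exact key2 φ hφ
    have hJν : S.Jmes ω ν ≤ S.EnExt ω f - ν f := by
      refine csSup_le (Jset_ne ν) ?_
      rintro x ⟨φ, hφ, rfl⟩
      exact key2 φ hφ
    have hmem : S.Jmes ω ν + ν f ∈
        {x : ℝ | ∃ ν' : S.M, S.finEnergy ω ν'.1 ∧ x = S.Jmes ω ν'.1 + ν'.1 f} :=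
      ⟨⟨ν, hprob⟩, hfinν, rfl⟩
    have hlower : ∀ x ∈ {x : ℝ | ∃ ν' : S.M, S.finEnergy ω ν'.1 ∧ x = S.Jmes ω ν'.1 + ν'.1 f},
        S.EnExt ω f ≤ x := by
      rintro x ⟨ν', hfin', rfl⟩
      exact easy f ν' hfin'
    refine le_antisymm (le_csInf ⟨_, hmem⟩ hlower) ?_
    refine le_trans (csInf_le ⟨S.EnExt ω f, hlower⟩ hmem) ?_
    linarith
  · -- second Legendre duality formula
    intro μ
    set K : Set ℝ := {x : ℝ | ∃ g : C(S.X, ℝ), x = S.EnExt ω g - μ.1 g} with hK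
    have K_ne : K.Nonempty := ⟨_, 0, rfl⟩
    have dir1 : BddAbove K → S.finEnergy ω μ.1 := by
      rintro ⟨b, hb⟩
      refine ⟨b, ?_⟩
      rintro x ⟨φ, hφ, rfl⟩
      have h1 : S.En ω φ ≤ S.EnExt ω ((φ : C(S.X, ℝ))) := S.En_le_EnExt hω hV hφ le_rfl
      have h2 : S.EnExt ω ((φ : C(S.X, ℝ))) - μ.1 ((φ : C(S.X, ℝ))) ≤ b :=
        hb ⟨(φ : C(S.X, ℝ)), rfl⟩
      have : S.En ω φ - μ.1 ((φ : C(S.X, ℝ)))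
          ≤ S.EnExt ω ((φ : C(S.X, ℝ))) - μ.1 ((φ : C(S.X, ℝ))) := by linarith
      linarith
    have dir2 : S.finEnergy ω μ.1 → ∀ g : C(S.X, ℝ),
        S.EnExt ω g - μ.1 g ≤ S.Jmes ω μ.1 := by
      intro hfin g
      have : S.EnExt ω g ≤ S.Jmes ω μ.1 + μ.1 g := by
        refine S.EnExt_le hω fun φ hφ hle => ?_
        have hJ : S.En ω φ - μ.1 ((φ : C(S.X, ℝ))) ≤ S.Jmes ω μ.1 :=
          le_csSup hfin ⟨φ, hφ, rfl⟩
        have hm : μ.1 ((φ : C(S.X, ℝ))) ≤ μ.1 g := S.lin_mono μ.2.1 hle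
        linarith
      linarith
    constructor
    · exact ⟨fun hfin => ⟨S.Jmes ω μ.1, by rintro x ⟨g, rfl⟩; exact dir2 hfin g⟩, dir1⟩
    · by_cases hfin : S.finEnergy ω μ.1
      · have hbddK : BddAbove K := ⟨S.Jmes ω μ.1, by rintro x ⟨g, rfl⟩; exact dir2 hfin g⟩
        refine le_antisymm ?_ (csSup_le K_ne ?_)
        · refine csSup_le (Jset_ne μ.1) ?_
          rintro x ⟨φ, hφ, rfl⟩
          have h1 : S.En ω φ ≤ S.EnExt ω ((φ : C(S.X, ℝ))) := S.En_le_EnExt hω hV hφ le_rfl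
          have h2 : S.EnExt ω ((φ : C(S.X, ℝ))) - μ.1 ((φ : C(S.X, ℝ))) ≤ sSup K :=
            le_csSup hbddK ⟨(φ : C(S.X, ℝ)), rfl⟩
          linarith
        · rintro x ⟨g, rfl⟩
          exact dir2 hfin g
      · have hnK : ¬BddAbove K := fun hb => hfin (dir1 hb)
        show sSup (S.Jset ω μ.1) = sSup K
        rw [Real.sSup_of_not_bddAbove hfin, Real.sSup_of_not_bddAbove hnK]
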